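/- Let σ ⊆ ℝ^n be a pointed polyhedral cone, let σ' = Face(σ, u) for some u ∈ σ^∨ (so σ' is a face of σ), and let u' ∈ (σ')^∨. Then there exists a decomposition u' = u₁ − u₂ with u₁ ∈ σ^∨ and u₂ ∈ σ^∨ ∩ (σ')^⊥. -/
import Mathlib


/-- Decomposition `u' = u₁ − u₂` with `u₁ ∈ σ^∨` and `u₂ ∈ σ^∨ ∩ (σ')^⊥` for
`u' ∈ (σ')^∨`, where `σ' = Face(σ,u)` is a face of a pointed polyhedral cone. -/
theorem stmt18 {n k : ℕ} (g : Fin k → Fin n → ℝ) (σ : Set (Fin n → ℝ))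
    (hσ : σ = {x | ∃ c : Fin k → ℝ, (∀ i, 0 ≤ c i) ∧ x = ∑ i, c i • g i})
    (hpointed : ∀ x ∈ σ, -x ∈ σ → x = 0)
    (u : Fin n → ℝ) (hu : ∀ v ∈ σ, 0 ≤ ∑ i, v i * u i)
    (σ' : Set (Fin n → ℝ)) (hσ' : σ' = {v ∈ σ | (∑ i, v i * u i) = 0})
    (u' : Fin n → ℝ) (hu' : ∀ v ∈ σ', 0 ≤ ∑ i, v i * u' i) :
    ∃ u₁ u₂ : Fin n → ℝ, u' = u₁ - u₂ ∧
      (∀ v ∈ σ, 0 ≤ ∑ i, v i * u₁ i) ∧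
      (∀ v ∈ σ, 0 ≤ ∑ i, v i * u₂ i) ∧
      (∀ v ∈ σ', (∑ i, v i * u₂ i) = 0) := by
  classical
  -- generators belong to σ
  have hg : ∀ i, g i ∈ σ := by
    intro i
    rw [hσ]
    refine ⟨fun j => if j = i then 1 else 0, fun j => by positivity, ?_⟩
    simp [ite_smul]
  -- pairing lemma
  have pair : ∀ (c : Fin k → ℝ) (w : Fin n → ℝ),
      ∑ j, (∑ i, c i • g i) j * w j = ∑ i, c i * ∑ j, g i j * w j := by
    intro c w
    simp only [Finset.sum_apply, Pi.smul_apply, smul_eq_mul, Finset.sum_mul, Finset.mul_sum]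
    rw [Finset.sum_comm]
    exact Finset.sum_congr rfl fun i _ => Finset.sum_congr rfl fun j _ => by ring
  set a : Fin k → ℝ := fun i => ∑ j, g i j * u' j with ha
  set b : Fin k → ℝ := fun i => ∑ j, g i j * u j with hb
  have hbnn : ∀ i, 0 ≤ b i := fun i => hu (g i) (hg i)
  have hann : ∀ i, b i = 0 → 0 ≤ a i := by
    intro i hbi
    exact hu' (g i) (by rw [hσ']; exact ⟨hg i, hbi⟩)
  set N : ℝ := ∑ i, if 0 < b i then max 0 (-(a i) / b i) else 0 with hN
  have hterm : ∀ i, 0 ≤ (if 0 < b i then max 0 (-(a i) / b i) else 0) := by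
    intro i; split
    · exact le_max_left _ _
    · exact le_refl 0
  have hN0 : 0 ≤ N := Finset.sum_nonneg fun i _ => hterm i
  have hNi : ∀ i, 0 ≤ a i + N * b i := by
    intro i
    rcases lt_or_eq_of_le (hbnn i) with hbi | hbi
    · have hle : -(a i) / b i ≤ N := by
        calc -(a i) / b i ≤ max 0 (-(a i) / b i) := le_max_right _ _
        _ = (if 0 < b i then max 0 (-(a i) / b i) else 0) := by rw [if_pos hbi]
        _ ≤ N := Finset.single_le_sum (fun j _ => hterm j) (Finset.mem_univ i)
      have := (div_le_iff₀ hbi).mp hle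
      linarith
    · have : 0 ≤ a i := hann i hbi.symm
      rw [← hbi]
      linarith
  refine ⟨u' + N • u, N • u, ?_, ?_, ?_, ?_⟩
  · funext j; simp
  · intro v hv
    rw [hσ] at hv
    obtain ⟨c, hc, rfl⟩ := hv
    rw [pair]
    refine Finset.sum_nonneg fun i _ => mul_nonneg (hc i) ?_
    have : ∑ j, g i j * (u' + N • u) j = a i + N * b i := by
      simp only [Pi.add_apply, Pi.smul_apply, smul_eq_mul, mul_add, Finset.sum_add_distrib,
        ha, hb, Finset.mul_sum]
      congr 1
      exact Finset.sum_congr rfl fun j _ => by ring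
    rw [this]
    exact hNi i
  · intro v hv
    have h1 : ∑ j, v j * (N • u) j = N * ∑ j, v j * u j := by
      simp only [Pi.smul_apply, smul_eq_mul, Finset.mul_sum]
      exact Finset.sum_congr rfl fun j _ => by ring
    rw [h1]
    exact mul_nonneg hN0 (hu v hv)
  · intro v hv
    rw [hσ'] at hv
    have h1 : ∑ j, v j * (N • u) j = N * ∑ j, v j * u j := by
      simp only [Pi.smul_apply, smul_eq_mul, Finset.mul_sum]
      exact Finset.sum_congr rfl fun j _ => by ring
    rw [h1, hv.2, mul_zero]
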